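/- Let r ∈ (1, ∞) and 0 ≤ L < 1, and let f : 𝒜 → 𝒜 be a mapping satisfying f(r x) = r f(x) for all x ∈ 𝒜. Suppose φ : 𝒜 × 𝒜 × 𝒜 → [0, ∞) satisfies ‖r μ f((a+b)/r) + r μ f((a−b)/r) − 2 f(μ a) + f(c c* c) − f(c) c* c − c (f(c))* c − c c* f(c)‖ ≤ φ(a, b, c) for all μ ∈ 𝕋 and all a, b, c ∈ 𝒜, and φ(x, y, z) ≤ r L φ(x/r, y/r, z/r) for all x, y, z ∈ 𝒜. Then f is a J*-derivation on 𝒜. -/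

import Mathlib

/-!
Using `f (r⁻¹ x) = r⁻¹ f x`, the defect splits into a Jensen part in `(a, b)`, homogeneous of
degree 1 under `x ↦ r x`, and a derivation part in `c`, homogeneous of degree 3 because the
triple product is real-cubic. The control function grows by at most the factor `rL < r` under
the same rescaling, so iterating forces both parts to vanish. The exact Jensen equation gives
additivity and `f (μ a) = μ f a` for `|μ| = 1`; since every `t ∈ [-2, 2]` is `μ + conj μ` with
`|μ| = 1`, this upgrades to `ℂ`-linearity.
-/

open ContinuousLinearMap Filter

variable {H K : Type*} [NormedAddCommGroup H] [InnerProductSpace ℂ H] [CompleteSpace H]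
  [NormedAddCommGroup K] [InnerProductSpace ℂ K] [CompleteSpace K]

/-- `𝒜` is closed under the `J*`-triple product `x ↦ x x* x`. -/
def JStarClosed (𝒜 : Submodule ℂ (H →L[ℂ] K)) : Prop :=
  ∀ x : H →L[ℂ] K, x ∈ 𝒜 → (x ∘L adjoint x) ∘L x ∈ 𝒜

/-- The triple product `c c* c` as an element of `𝒜`. -/
noncomputable def cube (𝒜 : Submodule ℂ (H →L[ℂ] K)) (hA : JStarClosed 𝒜) (c : 𝒜) : 𝒜 :=
  ⟨((c : H →L[ℂ] K) ∘L adjoint (c : H →L[ℂ] K)) ∘L (c : H →L[ℂ] K), hA c c.2⟩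

/-- `D : 𝒜 → 𝒜` is a `J*`-derivation: it is `ℂ`-linear and satisfies
`D(c c* c) = D(c) c* c + c (D(c))* c + c c* D(c)`. -/
noncomputable def IsJStarDerivation (𝒜 : Submodule ℂ (H →L[ℂ] K)) (hA : JStarClosed 𝒜)
    (D : 𝒜 → 𝒜) : Prop :=
  (∀ a b : 𝒜, D (a + b) = D a + D b) ∧
  (∀ (z : ℂ) (a : 𝒜), D (z • a) = z • D a) ∧
  (∀ c : 𝒜, (D (cube 𝒜 hA c) : H →L[ℂ] K) =
      ((D c : H →L[ℂ] K) ∘L adjoint (c : H →L[ℂ] K)) ∘L (c : H →L[ℂ] K) +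
      ((c : H →L[ℂ] K) ∘L adjoint (D c : H →L[ℂ] K)) ∘L (c : H →L[ℂ] K) +
      ((c : H →L[ℂ] K) ∘L adjoint (c : H →L[ℂ] K)) ∘L (D c : H →L[ℂ] K))

/-- The defect of the generalized Jensen functional equation combined with the
`J*`-derivation identity, for a map `f : 𝒜 → 𝒜`, parameter `r` and scalar `μ`. -/
noncomputable def jensenDefect (𝒜 : Submodule ℂ (H →L[ℂ] K)) (hA : JStarClosed 𝒜)
    (r : ℝ) (f : 𝒜 → 𝒜) (μ : ℂ) (a b c : 𝒜) : H →L[ℂ] K :=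
  ((r : ℂ) * μ) • (f ((r : ℂ)⁻¹ • (a + b)) : H →L[ℂ] K) +
  ((r : ℂ) * μ) • (f ((r : ℂ)⁻¹ • (a - b)) : H →L[ℂ] K) -
  (2 : ℂ) • (f (μ • a) : H →L[ℂ] K) +
  (f (cube 𝒜 hA c) : H →L[ℂ] K) -
  ((f c : H →L[ℂ] K) ∘L adjoint (c : H →L[ℂ] K)) ∘L (c : H →L[ℂ] K) -
  ((c : H →L[ℂ] K) ∘L adjoint (f c : H →L[ℂ] K)) ∘L (c : H →L[ℂ] K) -
  ((c : H →L[ℂ] K) ∘L adjoint (c : H →L[ℂ] K)) ∘L (f c : H →L[ℂ] K)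

theorem eq_zero_of_norm_le_of_iterate {X V : Type*} [NormedAddCommGroup V] (T : X → X)
    (g : X → V) (ψ : X → ℝ) {s q : ℝ} (hq : 0 ≤ q) (hqs : q < s)
    (hg : ∀ x, ‖g (T x)‖ = s * ‖g x‖) (hψ : ∀ x, ψ (T x) ≤ q * ψ x)
    (hgψ : ∀ x, ‖g x‖ ≤ ψ x) (x : X) : g x = 0 := by
  have hs : 0 < s := hq.trans_lt hqs
  have hgn : ∀ n : ℕ, ‖g (T^[n] x)‖ = s ^ n * ‖g x‖ := fun n => by
    induction n with
    | zero => simp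
    | succ n ih => rw [Function.iterate_succ_apply', hg, ih, pow_succ]; ring
  have hψn : ∀ n : ℕ, ψ (T^[n] x) ≤ q ^ n * ψ x := fun n => by
    induction n with
    | zero => simp
    | succ n ih =>
      rw [Function.iterate_succ_apply', pow_succ', mul_assoc]
      exact (hψ _).trans (mul_le_mul_of_nonneg_left ih hq)
  have hbound : ∀ n : ℕ, ‖g x‖ ≤ (q / s) ^ n * ψ x := fun n => by
    rw [div_pow, div_mul_eq_mul_div, le_div_iff₀ (pow_pos hs n), mul_comm, ← hgn]
    exact (hgψ _).trans (hψn n)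
  have hlim : Tendsto (fun n : ℕ => (q / s) ^ n * ψ x) atTop (nhds 0) := by
    simpa using (tendsto_pow_atTop_nhds_zero_of_lt_one (div_nonneg hq hs.le)
      ((div_lt_one hs).2 hqs)).mul_const (ψ x)
  exact norm_le_zero_iff.1 (ge_of_tendsto' hlim hbound)

theorem map_zero_of_map_smul {k M N : Type*} [DivisionRing k] [AddCommGroup M] [Module k M]
    [AddCommGroup N] [Module k N] {f : M → N} {c : k} (hc : c ≠ 1)
    (hf : ∀ x, f (c • x) = c • f x) : f 0 = 0 := by
  have h : (c - 1) • f 0 = 0 := by rw [sub_smul, one_smul, ← hf, smul_zero, sub_self]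
  exact (smul_eq_zero.1 h).resolve_left (sub_ne_zero.2 hc)

section Scaling

variable {k M N : Type*} [GroupWithZero k] [MulAction k M] [MulAction k N] {c : k}

theorem map_inv_smul_of_map_smul {f : M → N} (hc : c ≠ 0) (hf : ∀ x, f (c • x) = c • f x)
    (x : M) : f (c⁻¹ • x) = c⁻¹ • f x := by
  rw [eq_inv_smul_iff₀ hc, ← hf, smul_inv_smul₀ hc]

theorem map_pow_smul_of_map_smul {f : M → N} (hf : ∀ x, f (c • x) = c • f x) (n : ℕ) (x : M) :
    f (c ^ n • x) = c ^ n • f x := by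
  induction n with
  | zero => simp
  | succ n ih => rw [pow_succ', mul_smul, hf, ih, mul_smul]

theorem apply_smul_le_of_le_apply_inv_smul {φ : M → M → M → ℝ} {C : ℝ} (hc : c ≠ 0)
    (hφ : ∀ x y z, φ x y z ≤ C * φ (c⁻¹ • x) (c⁻¹ • y) (c⁻¹ • z)) (x y z : M) :
    φ (c • x) (c • y) (c • z) ≤ C * φ x y z := by
  simpa only [inv_smul_smul₀ hc] using hφ (c • x) (c • y) (c • z)

end Scaling

theorem map_add_of_jensen {k M N : Type*} [Field k] [CharZero k] [AddCommGroup M]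
    [Module k M] [AddCommGroup N] {f : M → N} (h0 : f 0 = 0)
    (h : ∀ a b, f (a + b) + f (a - b) = 2 • f a) (u v : M) : f (u + v) = f u + f v := by
  set w := (2 : k)⁻¹ • (u + v)
  set z := (2 : k)⁻¹ • (u - v)
  have hwz : w + z = u := by simp only [w, z]; module
  have hwz' : w - z = v := by simp only [w, z]; module
  have hww : w + w = u + v := by simp only [w]; module
  have h1 := h w z
  have h2 := h w w
  rw [hwz, hwz'] at h1
  rw [hww, sub_self, h0, add_zero] at h2
  rw [h1, h2]

open ComplexConjugate in
theorem Complex.exists_norm_eq_one_add_conj_eq {t : ℝ} (ht : |t| ≤ 2) :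
    ∃ μ : ℂ, ‖μ‖ = 1 ∧ μ + conj μ = t := by
  refine ⟨Complex.exp (Real.arccos (t / 2) * Complex.I), Complex.norm_exp_ofReal_mul_I _, ?_⟩
  obtain ⟨ht₁, ht₂⟩ := abs_le.1 ht
  rw [Complex.add_conj, Complex.exp_ofReal_mul_I_re, Real.cos_arccos (by linarith) (by linarith)]
  push_cast
  ring

open ComplexConjugate in
theorem AddMonoidHom.map_smul_of_map_unit_smul {M N : Type*} [AddCommGroup M] [Module ℂ M]
    [AddCommGroup N] [Module ℂ N] (f : M →+ N)
    (hf : ∀ μ : ℂ, ‖μ‖ = 1 → ∀ x, f (μ • x) = μ • f x) (z : ℂ) (x : M) :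
    f (z • x) = z • f x := by
  have hsmall : ∀ t : ℝ, |t| ≤ 2 → ∀ x, f ((t : ℂ) • x) = (t : ℂ) • f x := by
    intro t ht x
    obtain ⟨μ, hμ, hμt⟩ := Complex.exists_norm_eq_one_add_conj_eq ht
    rw [← hμt, add_smul, map_add, hf μ hμ, hf (conj μ) (by rwa [Complex.norm_conj]), add_smul]
  have hreal : ∀ t : ℝ, ∀ x, f ((t : ℂ) • x) = (t : ℂ) • f x := by
    intro t x
    obtain ⟨n, hn⟩ := exists_nat_gt (|t| / 2)
    have hn0 : (0 : ℝ) < n := (div_nonneg (abs_nonneg t) zero_le_two).trans_lt hn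
    have hsplit : (t : ℂ) = n * ((t / n : ℝ) : ℂ) := by
      have : (n : ℂ) ≠ 0 := by exact_mod_cast hn0.ne'
      push_cast
      field_simp
    have htn : |t / n| ≤ 2 := by
      rw [abs_div, Nat.abs_cast, div_le_iff₀ hn0]; linarith
    rw [hsplit, mul_smul, mul_smul, Nat.cast_smul_eq_nsmul, Nat.cast_smul_eq_nsmul, map_nsmul,
      hsmall _ htn]
  have hz : z = z.re + z.im * Complex.I := (Complex.re_add_im z).symm
  rw [hz, add_smul, add_smul, mul_smul, mul_smul, map_add, hreal, hreal,
    hf _ Complex.norm_I]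

section Jensen

variable {M : Type*} [AddCommGroup M] [Module ℂ M]

def additiveDefect (f : M → M) (μ : ℂ) (a b : M) : M :=
  μ • f (a + b) + μ • f (a - b) - (2 : ℂ) • f (μ • a)

theorem additiveDefect_smul {f : M → M} {s : ℂ} (hf : ∀ x, f (s • x) = s • f x) (μ : ℂ)
    (a b : M) : additiveDefect f μ (s • a) (s • b) = s • additiveDefect f μ a b := by
  rw [additiveDefect, additiveDefect, ← smul_add s a b, ← smul_sub s a b, smul_comm μ s a,
    hf, hf, hf]
  module

end Jensen

section JStar

variable {𝒜 : Submodule ℂ (H →L[ℂ] K)}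

noncomputable def derivationDefect (hA : JStarClosed 𝒜) (f : 𝒜 → 𝒜) (c : 𝒜) : H →L[ℂ] K :=
  (f (cube 𝒜 hA c) : H →L[ℂ] K) -
  ((f c : H →L[ℂ] K) ∘L adjoint (c : H →L[ℂ] K)) ∘L (c : H →L[ℂ] K) -
  ((c : H →L[ℂ] K) ∘L adjoint (f c : H →L[ℂ] K)) ∘L (c : H →L[ℂ] K) -
  ((c : H →L[ℂ] K) ∘L adjoint (c : H →L[ℂ] K)) ∘L (f c : H →L[ℂ] K)

variable {hA : JStarClosed 𝒜} {r : ℝ} {f : 𝒜 → 𝒜}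

theorem jensenDefect_eq_additiveDefect_add_derivationDefect (hr : (r : ℂ) ≠ 0)
    (hfr : ∀ x, f ((r : ℂ)⁻¹ • x) = (r : ℂ)⁻¹ • f x) (μ : ℂ) (a b c : 𝒜) :
    jensenDefect 𝒜 hA r f μ a b c = additiveDefect f μ a b + derivationDefect hA f c := by
  simp only [jensenDefect, additiveDefect, derivationDefect, hfr, Submodule.coe_add,
    Submodule.coe_sub, Submodule.coe_smul, smul_smul]
  rw [show (r : ℂ) * μ * (r : ℂ)⁻¹ = μ by field_simp]
  abel

theorem cube_ofReal_smul (t : ℝ) (c : 𝒜) :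
    cube 𝒜 hA ((t : ℂ) • c) = (t : ℂ) ^ 3 • cube 𝒜 hA c := by
  ext1
  simp only [cube, Submodule.coe_smul, map_smulₛₗ, Complex.conj_ofReal, smul_comp, comp_smul,
    smul_smul]
  ring_nf

theorem derivationDefect_ofReal_smul {t : ℝ} (hf : ∀ x, f ((t : ℂ) • x) = (t : ℂ) • f x)
    (c : 𝒜) : derivationDefect hA f ((t : ℂ) • c) = (t : ℂ) ^ 3 • derivationDefect hA f c := by
  simp only [derivationDefect, cube_ofReal_smul, map_pow_smul_of_map_smul hf, hf,
    Submodule.coe_smul, map_smulₛₗ, Complex.conj_ofReal, smul_comp, comp_smul, smul_smul,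
    smul_sub]
  ring_nf

theorem derivationDefect_zero (hf0 : f 0 = 0) : derivationDefect hA f 0 = 0 := by
  have hcube : cube 𝒜 hA 0 = 0 := by ext1; simp [cube]
  simp [derivationDefect, hcube, hf0]

theorem additiveDefect_eq_zero (hr : 1 < r) {L : ℝ} (hL0 : 0 ≤ L) (hL1 : L < 1)
    (hfr : ∀ x : 𝒜, f ((r : ℂ) • x) = (r : ℂ) • f x) {φ : 𝒜 → 𝒜 → 𝒜 → ℝ}
    (hineq : ∀ (μ : ℂ), ‖μ‖ = 1 → ∀ a b c : 𝒜, ‖jensenDefect 𝒜 hA r f μ a b c‖ ≤ φ a b c)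
    (hφ : ∀ x y z : 𝒜,
      φ x y z ≤ r * L * φ ((r : ℂ)⁻¹ • x) ((r : ℂ)⁻¹ • y) ((r : ℂ)⁻¹ • z))
    {μ : ℂ} (hμ : ‖μ‖ = 1) (a b : 𝒜) : additiveDefect f μ a b = 0 := by
  have hr0 : 0 < r := one_pos.trans hr
  have hrC : (r : ℂ) ≠ 0 := by exact_mod_cast hr0.ne'
  have hf0 : f 0 = 0 := map_zero_of_map_smul (by exact_mod_cast hr.ne') hfr
  rw [← Submodule.coe_eq_zero]
  refine eq_zero_of_norm_le_of_iterate (fun p : 𝒜 × 𝒜 => (r : ℂ) • p)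
    (fun p => ((additiveDefect f μ p.1 p.2 : 𝒜) : H →L[ℂ] K)) (fun p => φ p.1 p.2 0)
    (s := r) (mul_nonneg hr0.le hL0) (by nlinarith) (fun p => ?_) (fun p => ?_) (fun p => ?_)
    (a, b)
  · simp only [Prod.smul_fst, Prod.smul_snd]
    rw [additiveDefect_smul hfr, Submodule.coe_smul, norm_smul, Complex.norm_real,
      Real.norm_of_nonneg hr0.le]
  · simpa only [Prod.smul_fst, Prod.smul_snd, smul_zero] using
      apply_smul_le_of_le_apply_inv_smul hrC hφ p.1 p.2 0
  · have h := hineq μ hμ p.1 p.2 0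
    rwa [jensenDefect_eq_additiveDefect_add_derivationDefect hrC
      (map_inv_smul_of_map_smul hrC hfr), derivationDefect_zero hf0, add_zero] at h

theorem derivationDefect_eq_zero (hr : 1 < r) {L : ℝ} (hL0 : 0 ≤ L) (hL1 : L < 1)
    (hfr : ∀ x : 𝒜, f ((r : ℂ) • x) = (r : ℂ) • f x) {φ : 𝒜 → 𝒜 → 𝒜 → ℝ}
    (hineq : ∀ (μ : ℂ), ‖μ‖ = 1 → ∀ a b c : 𝒜, ‖jensenDefect 𝒜 hA r f μ a b c‖ ≤ φ a b c)
    (hφ : ∀ x y z : 𝒜,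
      φ x y z ≤ r * L * φ ((r : ℂ)⁻¹ • x) ((r : ℂ)⁻¹ • y) ((r : ℂ)⁻¹ • z))
    (c : 𝒜) : derivationDefect hA f c = 0 := by
  have hr0 : 0 < r := one_pos.trans hr
  have hrC : (r : ℂ) ≠ 0 := by exact_mod_cast hr0.ne'
  refine eq_zero_of_norm_le_of_iterate (fun c => (r : ℂ) • c) (derivationDefect hA f)
    (fun c => φ 0 0 c) (s := r ^ 3) (mul_nonneg hr0.le hL0)
    (by nlinarith [le_self_pow₀ hr.le three_ne_zero]) (fun c => ?_) (fun c => ?_)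
    (fun c => ?_) c
  · rw [derivationDefect_ofReal_smul hfr, norm_smul, norm_pow, Complex.norm_real,
      Real.norm_of_nonneg hr0.le]
  · simpa only [smul_zero] using apply_smul_le_of_le_apply_inv_smul hrC hφ 0 0 c
  · have h := hineq 1 norm_one 0 0 c
    have hzero : additiveDefect f 1 0 0 = 0 := by simp [additiveDefect, two_smul]
    rwa [jensenDefect_eq_additiveDefect_add_derivationDefect hrC
      (map_inv_smul_of_map_smul hrC hfr), hzero, Submodule.coe_zero, zero_add] at h

end JStar

theorem superstability_JStarDerivation_fixedPoint_general
    (𝒜 : Submodule ℂ (H →L[ℂ] K))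
    (hA : JStarClosed 𝒜)
    (r : ℝ) (hr : 1 < r) (L : ℝ) (hL0 : 0 ≤ L) (hL1 : L < 1)
    (f : 𝒜 → 𝒜) (hfr : ∀ x : 𝒜, f ((r : ℂ) • x) = (r : ℂ) • f x)
    (φ : 𝒜 → 𝒜 → 𝒜 → ℝ)
    (hineq : ∀ (μ : ℂ), ‖μ‖ = 1 → ∀ a b c : 𝒜, ‖jensenDefect 𝒜 hA r f μ a b c‖ ≤ φ a b c)
    (hφ : ∀ x y z : 𝒜,
      φ x y z ≤ r * L * φ ((r : ℂ)⁻¹ • x) ((r : ℂ)⁻¹ • y) ((r : ℂ)⁻¹ • z)) :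
    IsJStarDerivation 𝒜 hA f := by
  have hf0 : f 0 = 0 := map_zero_of_map_smul (by exact_mod_cast hr.ne') hfr
  have hjensen : ∀ μ : ℂ, ‖μ‖ = 1 → ∀ a b : 𝒜,
      μ • f (a + b) + μ • f (a - b) = (2 : ℂ) • f (μ • a) := fun μ hμ a b =>
    sub_eq_zero.1 (additiveDefect_eq_zero hr hL0 hL1 hfr hineq hφ hμ a b)
  have hadd : ∀ a b : 𝒜, f (a + b) = f a + f b :=
    map_add_of_jensen (k := ℂ) hf0 fun a b => by simpa [two_smul] using hjensen 1 norm_one a b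
  have hunit : ∀ μ : ℂ, ‖μ‖ = 1 → ∀ a : 𝒜, f (μ • a) = μ • f a := fun μ hμ a => by
    have h := hjensen μ hμ a 0
    rw [add_zero, sub_zero, ← two_smul ℂ] at h
    exact (smul_right_injective 𝒜 two_ne_zero h).symm
  refine ⟨hadd, (AddMonoidHom.mk' f hadd).map_smul_of_map_unit_smul hunit, fun c => ?_⟩
  have h := derivationDefect_eq_zero hr hL0 hL1 hfr hineq hφ c
  rw [derivationDefect, sub_sub, sub_sub, sub_eq_zero] at h
  rw [h, add_assoc]

/-- Theorem 3.4 (superstability via the fixed point alternative): if `f(rx) = rf(x)`,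
the Jensen/`J*` defect of `f` is controlled by `φ`, and
`φ(x,y,z) ≤ rL φ(x/r, y/r, z/r)` for some `L < 1`, then `f` is a `J*`-derivation. -/
theorem superstability_JStarDerivation_fixedPoint
    (𝒜 : Submodule ℂ (H →L[ℂ] K)) (hclosed : IsClosed (𝒜 : Set (H →L[ℂ] K)))
    (hA : JStarClosed 𝒜)
    (r : ℝ) (hr : 1 < r) (L : ℝ) (hL0 : 0 ≤ L) (hL1 : L < 1)
    (f : 𝒜 → 𝒜) (hfr : ∀ x : 𝒜, f ((r : ℂ) • x) = (r : ℂ) • f x)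
    (φ : 𝒜 → 𝒜 → 𝒜 → ℝ) (hφ0 : ∀ a b c : 𝒜, 0 ≤ φ a b c)
    (hineq : ∀ (μ : ℂ), ‖μ‖ = 1 → ∀ a b c : 𝒜, ‖jensenDefect 𝒜 hA r f μ a b c‖ ≤ φ a b c)
    (hφ : ∀ x y z : 𝒜,
      φ x y z ≤ r * L * φ ((r : ℂ)⁻¹ • x) ((r : ℂ)⁻¹ • y) ((r : ℂ)⁻¹ • z)) :
    IsJStarDerivation 𝒜 hA f :=
  superstability_JStarDerivation_fixedPoint_general 𝒜 hA r hr L hL0 hL1 f hfr φ hineq hφ
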